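/- Let ρ1 ∈ (0,1) and ρ2 ∈ (0,1−ρ1). Then the matrix G² := (1/2)·(R₂₁·(R⁻¹)ᵀ·H¹·R⁻¹ + R₂₂·(R⁻¹)ᵀ·H²·R⁻¹) equals [[0, 0], [0, −√((ρ1+ρ2)(1−ρ1−ρ2))]]. -/

import Mathlib

/-!
Writing `s = √(ρ1(1-ρ1))` and `t = √((ρ1+ρ2)(1-ρ1-ρ2))`, the matrix `R` is lower triangular with
inverse `!![s, 0; -s, t]`. Since `R₂₁ = R₂₂ = 1/t`, the two congruences combine into one with
`H¹ + H² = -2 𝟙𝟙ᵀ`, and `(R⁻¹)ᵀ 𝟙 = t e₂` because the first column of `R⁻¹` sums to zero.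
Hence `G² = (1/2t) · (-2t²) e₂e₂ᵀ = -t e₂e₂ᵀ`.
-/

open Matrix

/-- The normal-mode transformation matrix of the two-species TASEP. -/
noncomputable def matR (ρ1 ρ2 : ℝ) : Matrix (Fin 2) (Fin 2) ℝ :=
  !![1 / Real.sqrt (ρ1*(1 - ρ1)), 0;
     1 / Real.sqrt ((ρ1 + ρ2)*(1 - ρ1 - ρ2)), 1 / Real.sqrt ((ρ1 + ρ2)*(1 - ρ1 - ρ2))]

/-- The Hessian of the current j₁(ρ) = ρ1(1−ρ1). -/
def matH1 : Matrix (Fin 2) (Fin 2) ℝ := !![-2, 0; 0, 0]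

/-- The Hessian of the current j₂(ρ) = ρ2(1−ρ2) − 2ρ1ρ2. -/
def matH2 : Matrix (Fin 2) (Fin 2) ℝ := !![0, -2; -2, -2]

theorem Matrix.inv_of_lowerTriangular_fin_two {K : Type*} [Field K] {s t : K}
    (hs : s ≠ 0) (ht : t ≠ 0) :
    (!![1 / s, 0; 1 / t, 1 / t])⁻¹ = !![s, 0; -s, t] := by
  refine Matrix.inv_eq_right_inv ?_
  ext i j
  fin_cases i <;> fin_cases j <;> simp [Matrix.mul_apply, hs, ht]

theorem transpose_mul_matH1_add_matH2_mul (s t : ℝ) :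
    (!![s, 0; -s, t])ᵀ * (matH1 + matH2) * !![s, 0; -s, t] = !![0, 0; 0, -2 * t ^ 2] := by
  ext i j
  fin_cases i <;> fin_cases j <;> norm_num [matH1, matH2, Matrix.mul_apply]
  ring

/-- The coupling matrix G² of the second normal mode. -/
theorem matG2_eq
    (ρ1 ρ2 : ℝ) (h1 : ρ1 ∈ Set.Ioo (0:ℝ) 1) (h2 : ρ2 ∈ Set.Ioo (0:ℝ) (1 - ρ1)) :
    (1/2 : ℝ) • (matR ρ1 ρ2 1 0 • ((matR ρ1 ρ2)⁻¹ᵀ * matH1 * (matR ρ1 ρ2)⁻¹)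
        + matR ρ1 ρ2 1 1 • ((matR ρ1 ρ2)⁻¹ᵀ * matH2 * (matR ρ1 ρ2)⁻¹))
      = !![0, 0; 0, -Real.sqrt ((ρ1 + ρ2)*(1 - ρ1 - ρ2))] := by
  obtain ⟨h1a, h1b⟩ := h1
  obtain ⟨h2a, h2b⟩ := h2
  set s := Real.sqrt (ρ1*(1 - ρ1))
  set t := Real.sqrt ((ρ1 + ρ2)*(1 - ρ1 - ρ2))
  have hs : s ≠ 0 := (Real.sqrt_pos.2 (by nlinarith)).ne'
  have ht : t ≠ 0 := (Real.sqrt_pos.2 (by nlinarith)).ne'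
  have hR10 : matR ρ1 ρ2 1 0 = 1 / t := rfl
  have hR11 : matR ρ1 ρ2 1 1 = 1 / t := rfl
  have hR : matR ρ1 ρ2 = !![1 / s, 0; 1 / t, 1 / t] := rfl
  rw [hR10, hR11, ← smul_add, ← Matrix.add_mul, ← Matrix.mul_add, hR,
    Matrix.inv_of_lowerTriangular_fin_two hs ht, transpose_mul_matH1_add_matH2_mul]
  ext i j
  fin_cases i <;> fin_cases j <;> simp
  field_simp
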